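/- arXiv:1707.01344 — 7 statements merged into one kernel-verified Lean document; each statement's English description precedes it below -/
import Mathlib

section
/- Let S be a finite nonempty set. An rs function f : 2^S → 2^S can be specified by a (possibly degenerate) minimal reaction system over S (i.e., f = res_A for some set A of reactions in S all of whose reactant sets and inhibitor sets have at most one element) if and only if f is both union-subadditive and intersection-subadditive. -/
open Classical

/-- `f` is union-subadditive: `f (X ∪ Y) ⊆ f X ∪ f Y` for all `X, Y ⊆ S`. -/
def unionSub {S : Type*} (f : Set S → Set S) : Prop :=
  ∀ X Y : Set S, f (X ∪ Y) ⊆ f X ∪ f Y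

/-- `f` is intersection-subadditive: `f (X ∩ Y) ⊆ f X ∪ f Y` for all `X, Y ⊆ S`. -/
def interSub {S : Type*} (f : Set S → Set S) : Prop :=
  ∀ X Y : Set S, f (X ∩ Y) ⊆ f X ∪ f Y

/-- A reaction in `S`: a triple of a reactant set, an inhibitor set (disjoint from it),
and a nonempty product set. -/
structure Reaction (S : Type*) where
  reactants : Set S
  inhibitors : Set S
  products : Set S
  disjoint : Disjoint reactants inhibitors
  products_nonempty : products.Nonempty

/-- The result function of a reaction system `A` over `S`. -/
def res {S : Type*} (A : Set (Reaction S)) (X : Set S) : Set S :=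
  {s | ∃ a ∈ A, a.reactants ⊆ X ∧ a.inhibitors ∩ X = ∅ ∧ s ∈ a.products}

lemma notMem_biInter_aux {S ι : Type*} {f : Set S → Set S} (hi : interSub f) {s : S}
    (g : ι → Set S) (t : Finset ι) :
    t.Nonempty → (∀ i ∈ t, s ∉ f (g i)) → s ∉ f (⋂ i ∈ t, g i) := by
  classical
  induction t using Finset.induction_on with
  | empty => intro ht; simp at ht
  | @insert a u ha ih =>
    intro _ h
    by_cases hu : u.Nonempty
    · have h1 : s ∉ f (g a) := h a (Finset.mem_insert_self a u)
      have h2 := ih hu (fun i hi' => h i (Finset.mem_insert_of_mem hi'))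
      rw [Finset.set_biInter_insert]
      intro hmem
      rcases hi _ _ hmem with h' | h'
      · exact h1 h'
      · exact h2 h'
    · have : u = ∅ := Finset.not_nonempty_iff_eq_empty.mp hu
      subst this
      simpa using h a (Finset.mem_insert_self a ∅)

lemma notMem_biUnion_aux {S ι : Type*} {f : Set S → Set S} (hu : unionSub f) {s : S}
    (g : ι → Set S) (t : Finset ι) :
    t.Nonempty → (∀ i ∈ t, s ∉ f (g i)) → s ∉ f (⋃ i ∈ t, g i) := by
  classical
  induction t using Finset.induction_on with
  | empty => intro ht; simp at ht
  | @insert a u ha ih =>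
    intro _ h
    by_cases huN : u.Nonempty
    · have h1 : s ∉ f (g a) := h a (Finset.mem_insert_self a u)
      have h2 := ih huN (fun i hi' => h i (Finset.mem_insert_of_mem hi'))
      rw [Finset.set_biUnion_insert]
      intro hmem
      rcases hu _ _ hmem with h' | h'
      · exact h1 h'
      · exact h2 h'
    · have : u = ∅ := Finset.not_nonempty_iff_eq_empty.mp huN
      subst this
      simpa using h a (Finset.mem_insert_self a ∅)

theorem stmt0 {S : Type*} [Fintype S] [Nonempty S] (f : Set S → Set S) :
    (∃ A : Set (Reaction S),
        (∀ a ∈ A, a.reactants.Subsingleton ∧ a.inhibitors.Subsingleton) ∧ f = res A) ↔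
      unionSub f ∧ interSub f := by
  constructor
  · rintro ⟨A, hmin, rfl⟩
    constructor
    · intro X Y s hs
      obtain ⟨a, haA, hR, hI, hP⟩ := hs
      by_cases hRX : a.reactants ⊆ X
      · left
        refine ⟨a, haA, hRX, ?_, hP⟩
        have : a.inhibitors ∩ X ⊆ a.inhibitors ∩ (X ∪ Y) :=
          Set.inter_subset_inter_right _ Set.subset_union_left
        rw [hI] at this
        exact Set.eq_empty_of_subset_empty this
      · obtain ⟨r, hrR, hrX⟩ := Set.not_subset.mp hRX
        right
        refine ⟨a, haA, ?_, ?_, hP⟩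
        · intro x hx
          have hxr : x = r := (hmin a haA).1 hx hrR
          subst hxr
          rcases hR hrR with h | h
          · exact absurd h hrX
          · exact h
        · have : a.inhibitors ∩ Y ⊆ a.inhibitors ∩ (X ∪ Y) :=
            Set.inter_subset_inter_right _ Set.subset_union_right
          rw [hI] at this
          exact Set.eq_empty_of_subset_empty this
    · intro X Y s hs
      obtain ⟨a, haA, hR, hI, hP⟩ := hs
      have hRX : a.reactants ⊆ X := hR.trans Set.inter_subset_left
      have hRY : a.reactants ⊆ Y := hR.trans Set.inter_subset_right
      by_cases hIX : a.inhibitors ∩ X = ∅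
      · exact Or.inl ⟨a, haA, hRX, hIX, hP⟩
      · obtain ⟨i, hiI, hiX⟩ := Set.inter_nonempty.mp (Set.nonempty_iff_ne_empty.mpr hIX)
        right
        refine ⟨a, haA, hRY, ?_, hP⟩
        ext j
        simp only [Set.mem_inter_iff, Set.mem_empty_iff_false, iff_false, not_and]
        intro hjI hjY
        have hji : j = i := (hmin a haA).2 hjI hiI
        subst hji
        have : j ∈ a.inhibitors ∩ (X ∩ Y) := ⟨hjI, hiX, hjY⟩
        rw [hI] at this
        exact this
  · rintro ⟨hu, hi⟩
    refine ⟨{a | a.reactants.Subsingleton ∧ a.inhibitors.Subsingleton ∧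
        ∀ Z, a.reactants ⊆ Z → a.inhibitors ∩ Z = ∅ → a.products ⊆ f Z}, ?_, ?_⟩
    · intro a ha; exact ⟨ha.1, ha.2.1⟩
    · funext X
      apply Set.Subset.antisymm
      · -- f X ⊆ res A X
        intro s hs
        by_contra hns
        have key : ∀ R I : Set S, R.Subsingleton → I.Subsingleton → Disjoint R I →
            R ⊆ X → I ∩ X = ∅ → ∃ Z, R ⊆ Z ∧ I ∩ Z = ∅ ∧ s ∉ f Z := by
          intro R I hR hI hd hRX hIX
          by_contra hc
          push_neg at hc
          exact hns ⟨⟨R, I, {s}, hd, Set.singleton_nonempty s⟩,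
            ⟨hR, hI, fun Z h1 h2 => Set.singleton_subset_iff.mpr (hc Z h1 h2)⟩, hRX, hIX, rfl⟩
        by_cases hXne : X.Nonempty
        · by_cases hXc : Xᶜ.Nonempty
          · -- general case
            have key2 : ∀ r i : S, ∃ Z : Set S,
                r ∈ X → i ∉ X → r ∈ Z ∧ i ∉ Z ∧ s ∉ f Z := by
              intro r i
              by_cases hri : r ∈ X ∧ i ∉ X
              · obtain ⟨Z, h1, h2, h3⟩ := key {r} {i} Set.subsingleton_singleton
                  Set.subsingleton_singleton
                  (by
                    rw [Set.disjoint_singleton]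
                    rintro rfl
                    exact hri.2 hri.1)
                  (Set.singleton_subset_iff.mpr hri.1)
                  (by
                    ext x
                    simp only [Set.mem_inter_iff, Set.mem_singleton_iff,
                      Set.mem_empty_iff_false, iff_false, not_and]
                    rintro rfl
                    exact hri.2)
                refine ⟨Z, fun _ _ => ⟨h1 rfl, ?_, h3⟩⟩
                intro hiZ
                exact Set.eq_empty_iff_forall_notMem.mp h2 i ⟨rfl, hiZ⟩
              · exact ⟨∅, fun h1 h2 => absurd ⟨h1, h2⟩ hri⟩
            choose Z hZ using key2
            set T := (Set.toFinite X).toFinset with hTdef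
            set U := (Set.toFinite Xᶜ).toFinset with hUdef
            have hT : T.Nonempty := by rwa [Set.Finite.toFinset_nonempty]
            have hU : U.Nonempty := by rwa [Set.Finite.toFinset_nonempty]
            have hW : s ∉ f (⋃ r ∈ T, ⋂ i ∈ U, Z r i) := by
              apply notMem_biUnion_aux hu _ T hT
              intro r hrT
              have hrX : r ∈ X := (Set.Finite.mem_toFinset _).mp hrT
              apply notMem_biInter_aux hi _ U hU
              intro i hiU
              have hiX : i ∉ X := (Set.Finite.mem_toFinset _).mp hiU
              exact (hZ r i hrX hiX).2.2
            have hWX : (⋃ r ∈ T, ⋂ i ∈ U, Z r i) = X := by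
              ext x
              simp only [hTdef, hUdef, Set.mem_iUnion, Set.mem_iInter, Set.Finite.mem_toFinset,
                Set.mem_compl_iff]
              constructor
              · rintro ⟨r, hrX, hx⟩
                by_contra hxX
                exact (hZ r x hrX hxX).2.1 (hx x hxX)
              · intro hx
                exact ⟨x, hx, fun i hiXc => (hZ x i hx hiXc).1⟩
            rw [hWX] at hW
            exact hW hs
          · -- X = univ
            have hXu : X = Set.univ := by
              rw [Set.not_nonempty_iff_eq_empty, Set.compl_empty_iff] at hXc
              exact hXc
            have key2 : ∀ r : S, ∃ Z : Set S, r ∈ Z ∧ s ∉ f Z := by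
              intro r
              obtain ⟨Z, h1, h2, h3⟩ := key {r} ∅ Set.subsingleton_singleton
                Set.subsingleton_empty (Set.disjoint_empty _)
                (by rw [hXu]; exact Set.subset_univ _) (Set.empty_inter _)
              exact ⟨Z, h1 rfl, h3⟩
            choose Z hZ1 hZ2 using key2
            have hW : s ∉ f (⋃ r ∈ (Finset.univ : Finset S), Z r) := by
              apply notMem_biUnion_aux hu _ _ Finset.univ_nonempty
              intro r _
              exact hZ2 r
            have hWX : (⋃ r ∈ (Finset.univ : Finset S), Z r) = X := by
              rw [hXu]
              ext x
              simp only [Set.mem_iUnion, Set.mem_univ, iff_true]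
              exact ⟨x, Finset.mem_univ x, hZ1 x⟩
            rw [hWX] at hW
            exact hW hs
        · -- X = ∅
          have hXe : X = ∅ := Set.not_nonempty_iff_eq_empty.mp hXne
          have key2 : ∀ i : S, ∃ Z : Set S, i ∉ Z ∧ s ∉ f Z := by
            intro i
            obtain ⟨Z, h1, h2, h3⟩ := key ∅ {i} Set.subsingleton_empty
              Set.subsingleton_singleton (Set.disjoint_empty _).symm
              (Set.empty_subset _) (by rw [hXe]; exact Set.inter_empty _)
            refine ⟨Z, ?_, h3⟩
            intro hiZ
            exact Set.eq_empty_iff_forall_notMem.mp h2 i ⟨rfl, hiZ⟩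
          choose Z hZ1 hZ2 using key2
          have hW : s ∉ f (⋂ i ∈ (Finset.univ : Finset S), Z i) := by
            apply notMem_biInter_aux hi _ _ Finset.univ_nonempty
            intro i _
            exact hZ2 i
          have hWX : (⋂ i ∈ (Finset.univ : Finset S), Z i) = X := by
            rw [hXe]
            ext x
            simp only [Set.mem_iInter, Set.mem_empty_iff_false, iff_false, not_forall]
            exact ⟨x, Finset.mem_univ x, hZ1 x⟩
          rw [hWX] at hW
          exact hW hs
      · -- res A X ⊆ f X
        rintro s ⟨a, ha, h1, h2, h3⟩
        exact ha.2.2 X h1 h2 h3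
end

section
/- Let S be a finite set with |S| ≥ 3. Every rs function f ∈ F_U^P(S) is nondegenerate, restricts to a permutation of the collection of nonempty proper subsets of S, and is both union-subadditive and intersection-subadditive. -/
open Classical

noncomputable def fU {S : Type*} (σ : S → S) (X : Set S) : Set S :=
  if X = ∅ ∨ X = Set.univ then ∅ else σ '' X

noncomputable def fUc {S : Type*} (σ : S → S) (X : Set S) : Set S :=
  fU σ (Set.univ \ X)

noncomputable def FUP (S : Type*) : Set (Set S → Set S) :=
  {f | ∃ σ : Equiv.Perm S, f = fU ⇑σ} ∪ {f | ∃ σ : Equiv.Perm S, f = fUc ⇑σ}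

/-! On nonempty proper subsets `f_σ` is the image map of `σ`, which permutes that family,
distributes over `∪` and is monotone; an empty or full argument only makes the left side
smaller. Since `f_σᶜ = f_σ ∘ compl` and complementation swaps `∪` and `∩`, the two
subadditivity properties trade places for `f_σᶜ`. -/

open Set

def nontrivialSets (α : Type*) : Set (Set α) := {X | X ≠ ∅ ∧ X ≠ univ}

lemma compl_mem_nontrivialSets {α : Type*} {X : Set α} :
    Xᶜ ∈ nontrivialSets α ↔ X ∈ nontrivialSets α := by
  simp only [nontrivialSets, mem_ofPred_eq, ne_eq, compl_empty_iff, compl_univ_iff]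
  exact and_comm

lemma bijOn_compl_nontrivialSets (α : Type*) :
    BijOn compl (nontrivialSets α) (nontrivialSets α) :=
  (compl_involutive.toPerm _).bijOn fun _ => compl_mem_nontrivialSets

lemma Equiv.image_mem_nontrivialSets {α β : Type*} (e : α ≃ β) {X : Set α} :
    e '' X ∈ nontrivialSets β ↔ X ∈ nontrivialSets α := by
  have image_eq_univ : e '' X = univ ↔ X = univ := by
    rw [← image_univ_of_surjective e.surjective, e.injective.image_injective.eq_iff]
  simp [nontrivialSets, image_eq_univ]

lemma Equiv.bijOn_image_nontrivialSets {α β : Type*} (e : α ≃ β) :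
    BijOn (e '' ·) (nontrivialSets α) (nontrivialSets β) :=
  (Equiv.Set.congr e).bijOn fun _ => e.image_mem_nontrivialSets

lemma unionSub_comp_compl {α : Type*} {f : Set α → Set α} (hf : interSub f) :
    unionSub (f ∘ compl) := by
  intro X Y
  simpa only [Function.comp, compl_union] using hf Xᶜ Yᶜ

lemma interSub_comp_compl {α : Type*} {f : Set α → Set α} (hf : unionSub f) :
    interSub (f ∘ compl) := by
  intro X Y
  simpa only [Function.comp, compl_inter] using hf Xᶜ Yᶜ

section fU

variable {S : Type*} (σ : S → S)

@[simp] lemma fU_empty : fU σ ∅ = ∅ := by simp [fU]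

@[simp] lemma fU_univ : fU σ univ = ∅ := by simp [fU]

lemma fU_eqOn_image : EqOn (fU σ) (σ '' ·) (nontrivialSets S) := by
  rintro X ⟨hX, hX'⟩
  simp [fU, hX, hX']

lemma fU_subset_image (X : Set S) : fU σ X ⊆ σ '' X := by
  unfold fU
  split_ifs
  exacts [empty_subset _, subset_rfl]

lemma image_subset_fU {X : Set S} (hX : X ≠ univ) : σ '' X ⊆ fU σ X := by
  rcases eq_or_ne X ∅ with rfl | hX'
  · simp
  · exact (fU_eqOn_image σ ⟨hX', hX⟩).symm.subset

lemma fUc_eq_comp_compl : fUc σ = fU σ ∘ compl := by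
  ext X : 1
  simp [fUc, compl_eq_univ_sdiff]

lemma fU_unionSub : unionSub (fU σ) := by
  intro X Y
  rcases eq_or_ne (X ∪ Y) univ with hXY | hXY
  · simp [hXY]
  calc fU σ (X ∪ Y) ⊆ σ '' X ∪ σ '' Y := image_union σ X Y ▸ fU_subset_image σ _
    _ ⊆ fU σ X ∪ fU σ Y :=
      union_subset_union (image_subset_fU σ fun h => hXY (by simp [h]))
        (image_subset_fU σ fun h => hXY (by simp [h]))

lemma fU_interSub : interSub (fU σ) := by
  intro X Y
  rcases eq_or_ne X univ with rfl | hX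
  · simp only [univ_inter]
    exact subset_union_right
  calc fU σ (X ∩ Y) ⊆ σ '' X := (fU_subset_image σ _).trans (image_mono inter_subset_left)
    _ ⊆ fU σ X ∪ fU σ Y := (image_subset_fU σ hX).trans subset_union_left

lemma fUc_unionSub : unionSub (fUc σ) :=
  fUc_eq_comp_compl σ ▸ unionSub_comp_compl (fU_interSub σ)

lemma fUc_interSub : interSub (fUc σ) :=
  fUc_eq_comp_compl σ ▸ interSub_comp_compl (fU_unionSub σ)

end fU

section Perm

variable {S : Type*} (σ : Equiv.Perm S)

lemma fU_bijOn : BijOn (fU σ) (nontrivialSets S) (nontrivialSets S) :=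
  σ.bijOn_image_nontrivialSets.congr (fU_eqOn_image σ).symm

lemma fUc_bijOn : BijOn (fUc σ) (nontrivialSets S) (nontrivialSets S) :=
  fUc_eq_comp_compl σ ▸ (fU_bijOn σ).comp (bijOn_compl_nontrivialSets S)

end Perm

theorem stmt3_general {S : Type*}
    (f : Set S → Set S) (hf : f ∈ FUP S) :
    (f ∅ = ∅ ∧ f Set.univ = ∅) ∧
    Set.BijOn f {X : Set S | X ≠ ∅ ∧ X ≠ Set.univ} {X : Set S | X ≠ ∅ ∧ X ≠ Set.univ} ∧
    unionSub f ∧ interSub f := by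
  rcases hf with ⟨σ, rfl⟩ | ⟨σ, rfl⟩
  · exact ⟨⟨fU_empty σ, fU_univ σ⟩, fU_bijOn σ, fU_unionSub σ, fU_interSub σ⟩
  · refine ⟨?_, fUc_bijOn σ, fUc_unionSub σ, fUc_interSub σ⟩
    simp [fUc_eq_comp_compl]

theorem stmt3 {S : Type*} [Fintype S] (hS : 3 ≤ Fintype.card S)
    (f : Set S → Set S) (hf : f ∈ FUP S) :
    (f ∅ = ∅ ∧ f Set.univ = ∅) ∧
    Set.BijOn f {X : Set S | X ≠ ∅ ∧ X ≠ Set.univ} {X : Set S | X ≠ ∅ ∧ X ≠ Set.univ} ∧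
    unionSub f ∧ interSub f :=
  stmt3_general f hf
end

section
/- Let S be a finite nonempty set and let A be a set of reactions in S with f = res_A. Define f^c by f^c(X) = f(S \ X) for all X ⊆ S. Then f^c = res_{A'}, where A' = { (I_a, R_a, P_a) : a ∈ A } is obtained from A by interchanging the reactant set and the inhibitor set of every reaction. -/
open Classical

/-- The reaction obtained by interchanging the reactant set and the inhibitor set. -/
def Reaction.swapRI {S : Type*} (a : Reaction S) : Reaction S :=
  ⟨a.inhibitors, a.reactants, a.products, a.disjoint.symm, a.products_nonempty⟩

theorem stmt8 {S : Type*} [Fintype S] [Nonempty S] (A : Set (Reaction S))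
    (f : Set S → Set S) (hf : f = res A) :
    (fun X : Set S => f (Set.univ \ X)) = res (Reaction.swapRI '' A) := by
  subst hf
  funext X
  ext s
  simp only [res, Set.mem_setOf_eq, Set.mem_image, Reaction.swapRI,
    Set.eq_empty_iff_forall_notMem, Set.mem_inter_iff, Set.mem_diff, Set.mem_univ,
    true_and, Set.subset_def, not_and]
  constructor
  · rintro ⟨a, ha, hR, hI, hs⟩
    refine ⟨a.swapRI, ⟨a, ha, rfl⟩, ?_, ?_, hs⟩
    · intro x hx
      by_contra hxX
      exact hI x hx hxX
    · intro x hx hxX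
      exact hR x hx hxX
  · rintro ⟨_, ⟨a, ha, rfl⟩, hR, hI, hs⟩
    refine ⟨a, ha, ?_, ?_, hs⟩
    · intro x hx
      exact hI x hx
    · intro x hx hxd
      exact hxd (hR x hx)
end

section
/- Let S = {s_0, s_1, s_2} with |S| = 3. Let f be the permutation of 2^S that swaps {s_1} ↔ {s_0,s_1} and {s_1,s_2} ↔ S and fixes all other subsets, and let g be the permutation of 2^S that swaps {s_2} ↔ {s_1,s_2} and {s_0,s_2} ↔ S and fixes all other subsets. Then f and g are each both union-subadditive and intersection-subadditive, but the composition f ∘ g is not intersection-subadditive (witnessed by (f∘g)({s_2}) = S ⊄ (f∘g)({s_0,s_2}) ∪ (f∘g)({s_1,s_2})). Consequently, the set of permutations of 2^S belonging to M(S) is not closed under composition. -/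
open Classical

/-- The permutation of `2^S` swapping `{s1} ↔ {s0,s1}` and `{s1,s2} ↔ S`,
fixing all other subsets. -/
noncomputable def permF {S : Type*} (s0 s1 s2 : S) : Equiv.Perm (Set S) :=
  (Equiv.swap ({s1} : Set S) {s0, s1}).trans (Equiv.swap ({s1, s2} : Set S) Set.univ)

/-- The permutation of `2^S` swapping `{s2} ↔ {s1,s2}` and `{s0,s2} ↔ S`,
fixing all other subsets. -/
noncomputable def permG {S : Type*} (s0 s1 s2 : S) : Equiv.Perm (Set S) :=
  (Equiv.swap ({s2} : Set S) {s1, s2}).trans (Equiv.swap ({s0, s2} : Set S) Set.univ)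

/-- Concrete model of `permF` on `Finset (Fin 3)`. -/
def FcAux : Equiv.Perm (Finset (Fin 3)) :=
  (Equiv.swap ({1} : Finset (Fin 3)) {0, 1}).trans
    (Equiv.swap ({1, 2} : Finset (Fin 3)) Finset.univ)

/-- Concrete model of `permG` on `Finset (Fin 3)`. -/
def GcAux : Equiv.Perm (Finset (Fin 3)) :=
  (Equiv.swap ({2} : Finset (Fin 3)) {1, 2}).trans
    (Equiv.swap ({0, 2} : Finset (Fin 3)) Finset.univ)

theorem FcAux_sub : ∀ A B : Finset (Fin 3),
    FcAux (A ∪ B) ⊆ FcAux A ∪ FcAux B ∧ FcAux (A ∩ B) ⊆ FcAux A ∪ FcAux B := by decide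

theorem GcAux_sub : ∀ A B : Finset (Fin 3),
    GcAux (A ∪ B) ⊆ GcAux A ∪ GcAux B ∧ GcAux (A ∩ B) ⊆ GcAux A ∪ GcAux B := by decide

theorem FG2 : FcAux (GcAux {2}) = Finset.univ := by decide
theorem FG02 : FcAux (GcAux {0, 2}) = ({1, 2} : Finset (Fin 3)) := by decide
theorem FG12 : FcAux (GcAux {1, 2}) = ({2} : Finset (Fin 3)) := by decide
theorem inter0212 : ({0, 2} : Finset (Fin 3)) ∩ {1, 2} = {2} := by decide

/-- The Boolean-algebra correspondence `Finset (Fin 3) ≃ Set S`. -/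
noncomputable def tauE {S : Type*} (s0 s1 s2 : S)
    (hv : Function.Bijective ![s0, s1, s2]) : Finset (Fin 3) ≃ Set S where
  toFun A := ![s0, s1, s2] '' ↑A
  invFun X := Finset.univ.filter (fun i => ![s0, s1, s2] i ∈ X)
  left_inv A := by ext i; simp [hv.injective.mem_set_image]
  right_inv X := by
    ext a
    obtain ⟨i, rfl⟩ := hv.surjective a
    simp [hv.injective.mem_set_image]

theorem stmt10 {S : Type*} [Fintype S] (s0 s1 s2 : S)
    (h01 : s0 ≠ s1) (h02 : s0 ≠ s2) (h12 : s1 ≠ s2)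
    (hcard : Fintype.card S = 3)
    (huniv : (Set.univ : Set S) = {s0, s1, s2}) :
    (unionSub ⇑(permF s0 s1 s2) ∧ interSub ⇑(permF s0 s1 s2)) ∧
    (unionSub ⇑(permG s0 s1 s2) ∧ interSub ⇑(permG s0 s1 s2)) ∧
    ((⇑(permF s0 s1 s2) ∘ ⇑(permG s0 s1 s2)) ({s2} : Set S) = Set.univ ∧
      ¬ (⇑(permF s0 s1 s2) ∘ ⇑(permG s0 s1 s2)) ({s2} : Set S) ⊆
          (⇑(permF s0 s1 s2) ∘ ⇑(permG s0 s1 s2)) ({s0, s2} : Set S) ∪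
          (⇑(permF s0 s1 s2) ∘ ⇑(permG s0 s1 s2)) ({s1, s2} : Set S)) ∧
    ¬ interSub (⇑(permF s0 s1 s2) ∘ ⇑(permG s0 s1 s2)) ∧
    ¬ (∀ a b : Equiv.Perm (Set S),
        (unionSub ⇑a ∧ interSub ⇑a) → (unionSub ⇑b ∧ interSub ⇑b) →
        (unionSub (⇑a ∘ ⇑b) ∧ interSub (⇑a ∘ ⇑b))) := by
  have hv : Function.Bijective ![s0, s1, s2] := by
    rw [Fintype.bijective_iff_injective_and_card]
    refine ⟨?_, by simp [hcard]⟩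
    intro i j h
    fin_cases i <;> fin_cases j <;> simp_all <;>
      first
        | rfl
        | exact absurd h h01 | exact absurd h h02 | exact absurd h h12
        | exact absurd h.symm h01 | exact absurd h.symm h02 | exact absurd h.symm h12
  set τ := tauE s0 s1 s2 hv with hτ
  have hτu : ∀ A B : Finset (Fin 3), τ (A ∪ B) = τ A ∪ τ B := by
    intro A B; simp [hτ, tauE, Set.image_union]
  have hτi : ∀ A B : Finset (Fin 3), τ (A ∩ B) = τ A ∩ τ B := by
    intro A B
    simp [hτ, tauE, Finset.coe_inter, Set.image_inter hv.injective]
  have hτsub : ∀ A B : Finset (Fin 3), τ A ⊆ τ B ↔ A ⊆ B := by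
    intro A B
    simp [hτ, tauE, Set.image_subset_image_iff hv.injective]
  have t1 : τ ({1} : Finset (Fin 3)) = {s1} := by simp [hτ, tauE]
  have t2 : τ ({2} : Finset (Fin 3)) = {s2} := by simp [hτ, tauE]
  have t01 : τ ({0, 1} : Finset (Fin 3)) = {s0, s1} := by
    simp [hτ, tauE, Set.image_insert_eq]
  have t02 : τ ({0, 2} : Finset (Fin 3)) = {s0, s2} := by
    simp [hτ, tauE, Set.image_insert_eq]
  have t12 : τ ({1, 2} : Finset (Fin 3)) = {s1, s2} := by
    simp [hτ, tauE, Set.image_insert_eq]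
  have tuniv : τ (Finset.univ : Finset (Fin 3)) = Set.univ := by
    simp [hτ, tauE, Set.image_univ, hv.surjective.range_eq]
  have hswap : ∀ a b A : Finset (Fin 3),
      Equiv.swap (τ a) (τ b) (τ A) = τ (Equiv.swap a b A) := by
    intro a b A
    rw [← Equiv.symm_trans_swap_trans a b τ, Equiv.trans_apply, Equiv.trans_apply,
      Equiv.symm_apply_apply]
  have hF : ∀ A : Finset (Fin 3), permF s0 s1 s2 (τ A) = τ (FcAux A) := by
    intro A
    rw [permF, Equiv.trans_apply, ← t01, ← t12, ← tuniv, ← t1, hswap, hswap]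
    rfl
  have hG : ∀ A : Finset (Fin 3), permG s0 s1 s2 (τ A) = τ (GcAux A) := by
    intro A
    rw [permG, Equiv.trans_apply, ← t12, ← t02, ← tuniv, ← t2, hswap, hswap]
    rfl
  have hFG : ∀ A : Finset (Fin 3),
      (⇑(permF s0 s1 s2) ∘ ⇑(permG s0 s1 s2)) (τ A) = τ (FcAux (GcAux A)) := by
    intro A
    simp [Function.comp, hG, hF]
  have hFok : unionSub ⇑(permF s0 s1 s2) ∧ interSub ⇑(permF s0 s1 s2) := by
    constructor <;> intro X Y <;>
      obtain ⟨A, rfl⟩ := τ.surjective X <;> obtain ⟨B, rfl⟩ := τ.surjective Y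
    · rw [← hτu, hF, hF, hF, ← hτu, hτsub]
      exact (FcAux_sub A B).1
    · rw [← hτi, hF, hF, hF, ← hτu, hτsub]
      exact (FcAux_sub A B).2
  have hGok : unionSub ⇑(permG s0 s1 s2) ∧ interSub ⇑(permG s0 s1 s2) := by
    constructor <;> intro X Y <;>
      obtain ⟨A, rfl⟩ := τ.surjective X <;> obtain ⟨B, rfl⟩ := τ.surjective Y
    · rw [← hτu, hG, hG, hG, ← hτu, hτsub]
      exact (GcAux_sub A B).1
    · rw [← hτi, hG, hG, hG, ← hτu, hτsub]
      exact (GcAux_sub A B).2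
  have e2 : (⇑(permF s0 s1 s2) ∘ ⇑(permG s0 s1 s2)) ({s2} : Set S) = Set.univ := by
    rw [← t2, hFG, FG2, tuniv]
  have e02 : (⇑(permF s0 s1 s2) ∘ ⇑(permG s0 s1 s2)) ({s0, s2} : Set S) = {s1, s2} := by
    rw [← t02, hFG, FG02, t12]
  have e12 : (⇑(permF s0 s1 s2) ∘ ⇑(permG s0 s1 s2)) ({s1, s2} : Set S) = {s2} := by
    rw [← t12, hFG, FG12, t2]
  have hnsub : ¬ (⇑(permF s0 s1 s2) ∘ ⇑(permG s0 s1 s2)) ({s2} : Set S) ⊆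
      (⇑(permF s0 s1 s2) ∘ ⇑(permG s0 s1 s2)) ({s0, s2} : Set S) ∪
      (⇑(permF s0 s1 s2) ∘ ⇑(permG s0 s1 s2)) ({s1, s2} : Set S) := by
    rw [e2, e02, e12]
    intro h
    have hs0 := h (Set.mem_univ s0)
    simp [Set.mem_union, h01, h02] at hs0
  have hninter : ¬ interSub (⇑(permF s0 s1 s2) ∘ ⇑(permG s0 s1 s2)) := by
    intro h
    apply hnsub
    have key : ({s0, s2} : Set S) ∩ {s1, s2} = {s2} := by
      rw [← t02, ← t12, ← hτi, inter0212, t2]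
    have := h ({s0, s2} : Set S) ({s1, s2} : Set S)
    rwa [key] at this
  exact ⟨hFok, hGok, ⟨e2, hnsub⟩, hninter, fun h =>
    hninter (h (permF s0 s1 s2) (permG s0 s1 s2) hFok hGok).2⟩
end

section
/- Let S be a set with |S| = 3. There exist three rs functions f_1, f_2, f_3 over S, each both union-subadditive and intersection-subadditive (i.e., each in M(S)), such that every function g : 2^S → 2^S can be written as a composition of functions taken from {f_1, f_2, f_3}; i.e., three members of M(S) form a complete set of generating functions under composition for the set of all rs functions over S. -/
open Classical

/-!
The permutations of a finite set `α` are generated by a full cycle `σ` and the transposition of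
two points `x`, `σ x` consecutive on it. Together with a single map of rank `|α| - 1`, a collapse
`update id a b`, they generate every self-map of `α` under composition: all collapses are
conjugate, and a non-bijective `f` with `f a = f b`, `a ≠ b` and `c ∉ range f` factors as
`update f a c ∘ update id a b`, whose first factor has strictly larger range.
For `|S| = 3` it thus suffices to find an 8-cycle of `2^S`, a transposition of two points
consecutive on it, and a collapse, all union- and intersection-subadditive; this is a finite check
on `Finset (Fin 3)`.
-/

open Equiv Function Set

section CompClosure

variable {α β : Type*}

def compClosure (G : Set (α → α)) : Set (α → α) :=
  {g | ∃ l : List (α → α), l ≠ [] ∧ (∀ h ∈ l, h ∈ G) ∧ g = l.foldr (· ∘ ·) id}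

variable {G : Set (α → α)} {f g : α → α}

lemma List.foldr_comp_eq_comp (l : List (α → α)) (g : α → α) :
    l.foldr (· ∘ ·) g = l.foldr (· ∘ ·) id ∘ g := by
  induction l with
  | nil => rfl
  | cons h t ih => simp only [List.foldr_cons, ih, comp_assoc]

lemma subset_compClosure : G ⊆ compClosure G :=
  fun f hf => ⟨[f], List.cons_ne_nil _ _, by simpa using hf, rfl⟩

lemma comp_mem_compClosure (hf : f ∈ compClosure G) (hg : g ∈ compClosure G) :
    f ∘ g ∈ compClosure G := by
  obtain ⟨l₁, hl₁, hG₁, rfl⟩ := hf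
  obtain ⟨l₂, -, hG₂, rfl⟩ := hg
  refine ⟨l₁ ++ l₂, by simp [hl₁], fun h hh => ?_, ?_⟩
  · rcases List.mem_append.1 hh with h' | h'
    exacts [hG₁ h h', hG₂ h h']
  · rw [List.foldr_append, List.foldr_comp_eq_comp l₁ (l₂.foldr _ id)]

lemma iterate_succ_mem_compClosure (hf : f ∈ compClosure G) (n : ℕ) :
    f^[n + 1] ∈ compClosure G := by
  induction n with
  | zero => simpa
  | succ n ih => rw [iterate_succ']; exact comp_mem_compClosure hf ih

lemma Equiv.conj_foldr_comp (e : α ≃ β) (l : List (α → α)) :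
    e.conj (l.foldr (· ∘ ·) id) = (l.map e.conj).foldr (· ∘ ·) id := by
  induction l with
  | nil => ext; simp
  | cons h t ih => rw [List.foldr_cons, conj_comp, ih, List.map_cons, List.foldr_cons]

lemma Equiv.conj_mem_compClosure_image (e : α ≃ β) (hg : g ∈ compClosure G) :
    e.conj g ∈ compClosure (e.conj '' G) := by
  obtain ⟨l, hl, hG, rfl⟩ := hg
  refine ⟨l.map e.conj, by simpa using hl, ?_, e.conj_foldr_comp l⟩
  simp only [List.mem_map]
  rintro _ ⟨h, hh, rfl⟩
  exact mem_image_of_mem _ (hG h hh)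

end CompClosure

section PermPowers

variable {α : Type*} [Finite α] {G : Set (α → α)}

lemma id_mem_compClosure_of_perm {π : Perm α} (hπ : ⇑π ∈ compClosure G) :
    id ∈ compClosure G := by
  obtain ⟨n, hn⟩ := Nat.exists_eq_add_one_of_ne_zero (orderOf_pos π).ne'
  have := iterate_succ_mem_compClosure hπ n
  rwa [← hn, ← Perm.coe_pow, pow_orderOf_eq_one, Perm.coe_one] at this

lemma perm_pow_mem_compClosure {π : Perm α} (hπ : ⇑π ∈ compClosure G) (n : ℕ) :
    ⇑(π ^ n) ∈ compClosure G := by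
  cases n with
  | zero => exact id_mem_compClosure_of_perm hπ
  | succ n => rw [Perm.coe_pow]; exact iterate_succ_mem_compClosure hπ n

lemma perm_inv_mem_compClosure {π : Perm α} (hπ : ⇑π ∈ compClosure G) :
    ⇑π⁻¹ ∈ compClosure G := by
  obtain ⟨n, hn⟩ := mem_powers_iff_mem_zpowers.2 (inv_mem (Subgroup.mem_zpowers π))
  rw [← hn]
  exact perm_pow_mem_compClosure hπ n

end PermPowers

section Cycle

variable {α : Type*} [Fintype α] [DecidableEq α] {G : Set (α → α)}

theorem perm_mem_compClosure_of_isCycle {σ : Perm α} (hσ : σ.IsCycle)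
    (hsupp : σ.support = Finset.univ) {x : α} (hσG : ⇑σ ∈ compClosure G)
    (hswap : ⇑(swap x (σ x)) ∈ compClosure G) (π : Perm α) : ⇑π ∈ compClosure G := by
  have hπ : π ∈ Subgroup.closure {σ, swap x (σ x)} := by
    rw [Perm.closure_cycle_adjacent_swap hσ hsupp x]; exact Subgroup.mem_top π
  induction hπ using Subgroup.closure_induction with
  | mem τ hτ => rcases hτ with rfl | rfl; exacts [hσG, hswap]
  | one => exact id_mem_compClosure_of_perm hσG
  | mul τ ρ _ _ hτ hρ => rw [Perm.coe_mul]; exact comp_mem_compClosure hτ hρ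
  | inv τ _ hτ => exact perm_inv_mem_compClosure hτ

end Cycle

section Collapse

variable {α : Type*} [DecidableEq α] {G : Set (α → α)}

lemma exists_perm_apply_eq_and_apply_eq {a b c d : α} (hab : a ≠ b) (hcd : c ≠ d) :
    ∃ π : Perm α, π a = c ∧ π b = d := by
  refine ⟨swap (swap a c b) d * swap a c, ?_, by simp⟩
  have : c ≠ swap a c b := by
    rw [ne_comm, Ne, swap_apply_eq_iff, swap_apply_right]; exact hab.symm
  simp [swap_apply_of_ne_of_ne this hcd]

lemma perm_comp_update_id_comp_inv (π : Perm α) (a b : α) :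
    ⇑π ∘ update id a b ∘ ⇑π⁻¹ = update id (π a) (π b) := by
  rw [Perm.coe_inv, update_comp_equiv, comp_update, symm_symm]
  simp

lemma eq_update_comp_update_id {f : α → α} {a b : α} (hab : a ≠ b) (h : f a = f b) (c : α) :
    f = update f a c ∘ update id a b := by
  ext x
  rcases eq_or_ne x a with rfl | hx
  · simp [hab.symm, h]
  · simp [hx]

lemma range_ssubset_range_update {f : α → α} {a b c : α} (hab : a ≠ b) (h : f a = f b)
    (hc : c ∉ range f) : range f ⊂ range (update f a c) := by
  refine ssubset_of_subset_not_subset ?_ fun hsub => hc (hsub ⟨a, update_self a c f⟩)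
  calc range f = range (update f a c ∘ update id a b) := by
        rw [← eq_update_comp_update_id hab h]
    _ ⊆ range (update f a c) := range_comp_subset_range _ _

lemma update_id_mem_compClosure (hperm : ∀ π : Perm α, ⇑π ∈ compClosure G) {a b : α}
    (hab : a ≠ b) (hG : update id a b ∈ compClosure G) {c d : α} (hcd : c ≠ d) :
    update id c d ∈ compClosure G := by
  obtain ⟨π, rfl, rfl⟩ := exists_perm_apply_eq_and_apply_eq hab hcd
  rw [← perm_comp_update_id_comp_inv]
  exact comp_mem_compClosure (hperm π) (comp_mem_compClosure hG (hperm π⁻¹))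

theorem mem_compClosure_of_perm_of_update_id [Finite α]
    (hperm : ∀ π : Perm α, ⇑π ∈ compClosure G) {a b : α} (hab : a ≠ b)
    (hG : update id a b ∈ compClosure G) (f : α → α) : f ∈ compClosure G := by
  suffices ∀ s : Set α, ∀ f : α → α, range f = s → f ∈ compClosure G from this _ f rfl
  intro s
  induction s using WellFoundedGT.induction with
  | _ s ih =>
    rintro f rfl
    by_cases hf : Surjective f
    · exact hperm (Equiv.ofBijective f ⟨Finite.injective_iff_surjective.2 hf, hf⟩)
    obtain ⟨c, hc⟩ : ∃ c, c ∉ range f := by simpa [Surjective] using hf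
    obtain ⟨a', b', h, hab'⟩ := not_injective_iff.1 (mt Finite.injective_iff_surjective.1 hf)
    rw [eq_update_comp_update_id hab' h c]
    exact comp_mem_compClosure (ih _ (range_ssubset_range_update hab' h hc) _ rfl)
      (update_id_mem_compClosure hperm hab hG hab')

end Collapse

section Transfer

variable {S β : Type*} [Lattice β] (Φ : Set S ≃o β) {f : β → β}

lemma OrderIso.unionSub_and_interSub_conj
    (hf : ∀ x y, f (x ⊔ y) ≤ f x ⊔ f y ∧ f (x ⊓ y) ≤ f x ⊔ f y) :
    unionSub (Φ.symm.toEquiv.conj f) ∧ interSub (Φ.symm.toEquiv.conj f) := by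
  constructor <;> intro X Y
  · change Φ.symm (f (Φ (X ⊔ Y))) ≤ Φ.symm (f (Φ X)) ⊔ Φ.symm (f (Φ Y))
    rw [Φ.map_sup, ← Φ.symm.map_sup]
    exact Φ.symm.monotone (hf _ _).1
  · change Φ.symm (f (Φ (X ⊓ Y))) ≤ Φ.symm (f (Φ X)) ⊔ Φ.symm (f (Φ Y))
    rw [Φ.map_inf, ← Φ.symm.map_sup]
    exact Φ.symm.monotone (hf _ _).2

end Transfer

namespace PowersetFinThree

def cycle : Perm (Finset (Fin 3)) :=
  List.formPerm [∅, {0}, {2}, {0, 1}, {1, 2}, {0, 2}, {1}, Finset.univ]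

lemma isCycle_cycle : cycle.IsCycle := List.isCycle_formPerm (by decide) (by decide)

lemma support_cycle : cycle.support = Finset.univ := by decide

lemma cycle_singleton_one : cycle {1} = Finset.univ := by decide

def transposition : Perm (Finset (Fin 3)) := swap {1} Finset.univ

def collapse : Finset (Fin 3) → Finset (Fin 3) := update id Finset.univ ∅

lemma cycle_subadditive :
    ∀ X Y, cycle (X ⊔ Y) ≤ cycle X ⊔ cycle Y ∧
      cycle (X ⊓ Y) ≤ cycle X ⊔ cycle Y := by
  decide

lemma transposition_subadditive :
    ∀ X Y, transposition (X ⊔ Y) ≤ transposition X ⊔ transposition Y ∧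
      transposition (X ⊓ Y) ≤ transposition X ⊔ transposition Y := by
  decide

lemma collapse_subadditive :
    ∀ X Y, collapse (X ⊔ Y) ≤ collapse X ⊔ collapse Y ∧
      collapse (X ⊓ Y) ≤ collapse X ⊔ collapse Y := by
  -- the dependent cast inside `update` blocks `decide`, so unfold it to an `if` first
  simp only [collapse, update_apply, id_eq]
  decide

theorem mem_compClosure_generators (g : Finset (Fin 3) → Finset (Fin 3)) :
    g ∈ compClosure {⇑cycle, ⇑transposition, collapse} := by
  refine mem_compClosure_of_perm_of_update_id (fun π => ?_) Finset.univ_nonempty.ne_empty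
    (subset_compClosure (Or.inr (Or.inr rfl))) g
  refine perm_mem_compClosure_of_isCycle isCycle_cycle support_cycle (x := {1})
    (subset_compClosure (Or.inl rfl)) (subset_compClosure ?_) π
  rw [cycle_singleton_one]
  exact Or.inr (Or.inl rfl)

end PowersetFinThree

theorem stmt13 {S : Type*} [Fintype S] (hS : Fintype.card S = 3) :
    ∃ f₁ f₂ f₃ : Set S → Set S,
      (unionSub f₁ ∧ interSub f₁) ∧ (unionSub f₂ ∧ interSub f₂) ∧
      (unionSub f₃ ∧ interSub f₃) ∧
      ∀ g : Set S → Set S, ∃ l : List (Set S → Set S), l ≠ [] ∧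
        (∀ h ∈ l, h ∈ ({f₁, f₂, f₃} : Set (Set S → Set S))) ∧
        g = l.foldr (· ∘ ·) id := by
  open PowersetFinThree in
  obtain ⟨e⟩ : Nonempty (S ≃ Fin 3) := ⟨Fintype.equivFinOfCardEq hS⟩
  let Φ : Set S ≃o Finset (Fin 3) := e.toOrderIsoSet.trans Fintype.finsetOrderIsoSet.symm
  let T := Φ.symm.toEquiv.conj
  refine ⟨T cycle, T transposition, T collapse, Φ.unionSub_and_interSub_conj cycle_subadditive,
    Φ.unionSub_and_interSub_conj transposition_subadditive,
    Φ.unionSub_and_interSub_conj collapse_subadditive, fun g => ?_⟩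
  have := Φ.symm.toEquiv.conj_mem_compClosure_image (mem_compClosure_generators (T.symm g))
  rw [T.apply_symm_apply] at this
  simpa only [compClosure, mem_ofPred_eq, image_insert_eq, image_singleton] using this
end

section
/- Let S = {s_0, s_1, s_2, s_3} with |S| = 4. Let p be the permutation of 2^S that swaps {s_3} ↔ {s_0,s_1,s_3} and {s_2,s_3} ↔ S and fixes all other subsets, and let q be the permutation of 2^S that swaps {s_2} ↔ {s_0,s_2,s_3} and {s_1,s_2} ↔ S and fixes all other subsets. Then p and q are each both union-subadditive and intersection-subadditive, and the composition p ∘ q ∘ p ∘ q equals the 3-cycle {s_1,s_2} ↦ S ↦ {s_2,s_3} ↦ {s_1,s_2} on 2^S (fixing all other subsets). -/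
open Classical

/-- The permutation of `2^S` swapping `{s3} ↔ {s0,s1,s3}` and `{s2,s3} ↔ S`,
fixing all other subsets. -/
noncomputable def permP {S : Type*} (s0 s1 s2 s3 : S) : Equiv.Perm (Set S) :=
  (Equiv.swap ({s3} : Set S) {s0, s1, s3}).trans (Equiv.swap ({s2, s3} : Set S) Set.univ)

/-- The permutation of `2^S` swapping `{s2} ↔ {s0,s2,s3}` and `{s1,s2} ↔ S`,
fixing all other subsets. -/
noncomputable def permQ {S : Type*} (s0 s1 s2 s3 : S) : Equiv.Perm (Set S) :=
  (Equiv.swap ({s2} : Set S) {s0, s2, s3}).trans (Equiv.swap ({s1, s2} : Set S) Set.univ)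



abbrev BV4 := Bool × Bool × Bool × Bool

def encS {S : Type*} (s0 s1 s2 s3 : S) (v : BV4) : Set S :=
  {x | (v.1 = true ∧ x = s0) ∨ (v.2.1 = true ∧ x = s1) ∨
       (v.2.2.1 = true ∧ x = s2) ∨ (v.2.2.2 = true ∧ x = s3)}

def orV (v w : BV4) : BV4 := (v.1 || w.1, v.2.1 || w.2.1, v.2.2.1 || w.2.2.1, v.2.2.2 || w.2.2.2)
def andV (v w : BV4) : BV4 := (v.1 && w.1, v.2.1 && w.2.1, v.2.2.1 && w.2.2.1, v.2.2.2 && w.2.2.2)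
def subB (v w : BV4) : Bool :=
  (!v.1 || w.1) && (!v.2.1 || w.2.1) && (!v.2.2.1 || w.2.2.1) && (!v.2.2.2 || w.2.2.2)

def pF (v : BV4) : BV4 :=
  if v = (false,false,false,true) then (true,true,false,true)
  else if v = (true,true,false,true) then (false,false,false,true)
  else if v = (false,false,true,true) then (true,true,true,true)
  else if v = (true,true,true,true) then (false,false,true,true)
  else v

def qF (v : BV4) : BV4 :=
  if v = (false,false,true,false) then (true,false,true,true)
  else if v = (true,false,true,true) then (false,false,true,false)
  else if v = (false,true,true,false) then (true,true,true,true)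
  else if v = (true,true,true,true) then (false,true,true,false)
  else v

def tF (v : BV4) : BV4 :=
  if v = (false,true,true,false) then (true,true,true,true)
  else if v = (true,true,true,true) then (false,false,true,true)
  else if v = (false,false,true,true) then (false,true,true,false)
  else v

section Aux
variable {S : Type*} (s0 s1 s2 s3 : S)
variable (h01 : s0 ≠ s1) (h02 : s0 ≠ s2) (h03 : s0 ≠ s3)
variable (h12 : s1 ≠ s2) (h13 : s1 ≠ s3) (h23 : s2 ≠ s3)
variable (huniv : (Set.univ : Set S) = {s0, s1, s2, s3})

include huniv in
lemma elemCases (x : S) : x = s0 ∨ x = s1 ∨ x = s2 ∨ x = s3 := by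
  have hx : x ∈ (Set.univ : Set S) := Set.mem_univ x
  rw [huniv] at hx
  simpa using hx

include h01 h02 h03 in
lemma mem0 (v : BV4) : s0 ∈ encS s0 s1 s2 s3 v ↔ v.1 = true := by
  simp [encS, h01, h02, h03]

include h01 h12 h13 in
lemma mem1 (v : BV4) : s1 ∈ encS s0 s1 s2 s3 v ↔ v.2.1 = true := by
  simp [encS, Ne.symm h01, h12, h13]

include h02 h12 h23 in
lemma mem2 (v : BV4) : s2 ∈ encS s0 s1 s2 s3 v ↔ v.2.2.1 = true := by
  simp [encS, Ne.symm h02, Ne.symm h12, h23]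

include h03 h13 h23 in
lemma mem3 (v : BV4) : s3 ∈ encS s0 s1 s2 s3 v ↔ v.2.2.2 = true := by
  simp [encS, Ne.symm h03, Ne.symm h13, Ne.symm h23]

include h01 h02 h03 h12 h13 h23 in
lemma encS_inj (v w : BV4) : encS s0 s1 s2 s3 v = encS s0 s1 s2 s3 w ↔ v = w := by
  constructor
  · intro h
    obtain ⟨a, b, c, d⟩ := v
    obtain ⟨a', b', c', d'⟩ := w
    have e0 := (mem0 s0 s1 s2 s3 h01 h02 h03 (a,b,c,d)).symm.trans
      (h ▸ mem0 s0 s1 s2 s3 h01 h02 h03 (a',b',c',d'))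
    have e1 := (mem1 s0 s1 s2 s3 h01 h12 h13 (a,b,c,d)).symm.trans
      (h ▸ mem1 s0 s1 s2 s3 h01 h12 h13 (a',b',c',d'))
    have e2 := (mem2 s0 s1 s2 s3 h02 h12 h23 (a,b,c,d)).symm.trans
      (h ▸ mem2 s0 s1 s2 s3 h02 h12 h23 (a',b',c',d'))
    have e3 := (mem3 s0 s1 s2 s3 h03 h13 h23 (a,b,c,d)).symm.trans
      (h ▸ mem3 s0 s1 s2 s3 h03 h13 h23 (a',b',c',d'))
    simp only [Prod.mk.injEq]
    refine ⟨?_, ?_, ?_, ?_⟩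
    · revert e0; cases a <;> cases a' <;> simp
    · revert e1; cases b <;> cases b' <;> simp
    · revert e2; cases c <;> cases c' <;> simp
    · revert e3; cases d <;> cases d' <;> simp
  · rintro rfl; rfl

include h01 h02 h03 h12 h13 h23 huniv in
lemma encS_surj (X : Set S) : ∃ v : BV4, X = encS s0 s1 s2 s3 v := by
  classical
  refine ⟨(if s0 ∈ X then true else false, if s1 ∈ X then true else false,
    if s2 ∈ X then true else false, if s3 ∈ X then true else false), ?_⟩
  ext x
  rcases elemCases s0 s1 s2 s3 huniv x with hx0 | hx0 | hx0 | hx0 <;>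
    subst hx0 <;>
    simp only [encS, Set.mem_setOf_eq] <;> split_ifs <;>
    simp_all [h01, h02, h03, h12, h13, h23, Ne.symm h01, Ne.symm h02, Ne.symm h03,
      Ne.symm h12, Ne.symm h13, Ne.symm h23]

lemma encS_union (v w : BV4) :
    encS s0 s1 s2 s3 v ∪ encS s0 s1 s2 s3 w = encS s0 s1 s2 s3 (orV v w) := by
  ext x
  simp only [encS, orV, Set.mem_union, Set.mem_setOf_eq, Bool.or_eq_true]
  tauto

include h01 h02 h03 h12 h13 h23 in
lemma encS_inter (v w : BV4) :
    encS s0 s1 s2 s3 v ∩ encS s0 s1 s2 s3 w = encS s0 s1 s2 s3 (andV v w) := by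
  ext x
  by_cases e0 : x = s0
  · subst e0
    simp [encS, andV, h01, h02, h03, Bool.and_eq_true]
  by_cases e1 : x = s1
  · subst e1
    simp [encS, andV, Ne.symm h01, h12, h13, Bool.and_eq_true]
  by_cases e2 : x = s2
  · subst e2
    simp [encS, andV, Ne.symm h02, Ne.symm h12, h23, Bool.and_eq_true]
  by_cases e3 : x = s3
  · subst e3
    simp [encS, andV, Ne.symm h03, Ne.symm h13, Ne.symm h23, Bool.and_eq_true]
  · simp [encS, andV, e0, e1, e2, e3]

include h01 h02 h03 h12 h13 h23 huniv in
lemma encS_subset (v w : BV4) :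
    encS s0 s1 s2 s3 v ⊆ encS s0 s1 s2 s3 w ↔ subB v w = true := by
  constructor
  · intro h
    obtain ⟨a, b, c, d⟩ := v
    obtain ⟨a', b', c', d'⟩ := w
    have e0 : a = true → a' = true := fun ha =>
      (mem0 s0 s1 s2 s3 h01 h02 h03 _).1 (h ((mem0 s0 s1 s2 s3 h01 h02 h03 _).2 ha))
    have e1 : b = true → b' = true := fun hb =>
      (mem1 s0 s1 s2 s3 h01 h12 h13 _).1 (h ((mem1 s0 s1 s2 s3 h01 h12 h13 _).2 hb))
    have e2 : c = true → c' = true := fun hc =>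
      (mem2 s0 s1 s2 s3 h02 h12 h23 _).1 (h ((mem2 s0 s1 s2 s3 h02 h12 h23 _).2 hc))
    have e3 : d = true → d' = true := fun hd =>
      (mem3 s0 s1 s2 s3 h03 h13 h23 _).1 (h ((mem3 s0 s1 s2 s3 h03 h13 h23 _).2 hd))
    simp only [subB, Bool.and_eq_true, Bool.or_eq_true, Bool.not_eq_true']
    refine ⟨⟨⟨?_, ?_⟩, ?_⟩, ?_⟩
    · revert e0; cases a <;> cases a' <;> simp
    · revert e1; cases b <;> cases b' <;> simp
    · revert e2; cases c <;> cases c' <;> simp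
    · revert e3; cases d <;> cases d' <;> simp
  · intro h x hx
    simp only [subB, Bool.and_eq_true, Bool.or_eq_true, Bool.not_eq_true'] at h
    obtain ⟨⟨⟨e0, e1⟩, e2⟩, e3⟩ := h
    rcases elemCases s0 s1 s2 s3 huniv x with hx0 | hx0 | hx0 | hx0
    · rw [hx0] at hx ⊢
      rw [mem0 s0 s1 s2 s3 h01 h02 h03] at hx ⊢
      rcases e0 with e | e
      · rw [e] at hx; exact absurd hx (by simp)
      · exact e
    · rw [hx0] at hx ⊢
      rw [mem1 s0 s1 s2 s3 h01 h12 h13] at hx ⊢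
      rcases e1 with e | e
      · rw [e] at hx; exact absurd hx (by simp)
      · exact e
    · rw [hx0] at hx ⊢
      rw [mem2 s0 s1 s2 s3 h02 h12 h23] at hx ⊢
      rcases e2 with e | e
      · rw [e] at hx; exact absurd hx (by simp)
      · exact e
    · rw [hx0] at hx ⊢
      rw [mem3 s0 s1 s2 s3 h03 h13 h23] at hx ⊢
      rcases e3 with e | e
      · rw [e] at hx; exact absurd hx (by simp)
      · exact e

lemma setA : ({s3} : Set S) = encS s0 s1 s2 s3 (false,false,false,true) := by
  ext x; simp [encS]

lemma setB : ({s0, s1, s3} : Set S) = encS s0 s1 s2 s3 (true,true,false,true) := by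
  ext x; simp [encS]

lemma setC : ({s2, s3} : Set S) = encS s0 s1 s2 s3 (false,false,true,true) := by
  ext x; simp [encS]

lemma setD : ({s2} : Set S) = encS s0 s1 s2 s3 (false,false,true,false) := by
  ext x; simp [encS]

lemma setE : ({s0, s2, s3} : Set S) = encS s0 s1 s2 s3 (true,false,true,true) := by
  ext x; simp [encS]

lemma setF : ({s1, s2} : Set S) = encS s0 s1 s2 s3 (false,true,true,false) := by
  ext x; simp [encS]

include huniv in
lemma setU : (Set.univ : Set S) = encS s0 s1 s2 s3 (true,true,true,true) := by
  rw [huniv]; ext x; simp [encS]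

end Aux
section Perm
variable {S : Type*} (s0 s1 s2 s3 : S)
variable (h01 : s0 ≠ s1) (h02 : s0 ≠ s2) (h03 : s0 ≠ s3)
variable (h12 : s1 ≠ s2) (h13 : s1 ≠ s3) (h23 : s2 ≠ s3)
variable (huniv : (Set.univ : Set S) = {s0, s1, s2, s3})

include h01 h02 h03 h12 h13 h23 huniv in
lemma permP_encS (v : BV4) :
    permP s0 s1 s2 s3 (encS s0 s1 s2 s3 v) = encS s0 s1 s2 s3 (pF v) := by
  have hinj := encS_inj s0 s1 s2 s3 h01 h02 h03 h12 h13 h23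
  obtain ⟨a, b, c, d⟩ := v
  cases a <;> cases b <;> cases c <;> cases d <;>
    (simp only [permP, Equiv.trans_apply, Equiv.swap_apply_def];
     simp only [setB s0 s1 s2 s3];
     simp only [setC s0 s1 s2 s3];
     simp only [setA s0 s1 s2 s3];
     simp only [setU s0 s1 s2 s3 huniv];
     simp [hinj, pF])

include h01 h02 h03 h12 h13 h23 huniv in
lemma permQ_encS (v : BV4) :
    permQ s0 s1 s2 s3 (encS s0 s1 s2 s3 v) = encS s0 s1 s2 s3 (qF v) := by
  have hinj := encS_inj s0 s1 s2 s3 h01 h02 h03 h12 h13 h23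
  obtain ⟨a, b, c, d⟩ := v
  cases a <;> cases b <;> cases c <;> cases d <;>
    (simp only [permQ, Equiv.trans_apply, Equiv.swap_apply_def];
     simp only [setE s0 s1 s2 s3];
     simp only [setF s0 s1 s2 s3];
     simp only [setD s0 s1 s2 s3];
     simp only [setU s0 s1 s2 s3 huniv];
     simp [hinj, qF])

end Perm

theorem stmt17 {S : Type*} [Fintype S] (s0 s1 s2 s3 : S)
    (h01 : s0 ≠ s1) (h02 : s0 ≠ s2) (h03 : s0 ≠ s3)
    (h12 : s1 ≠ s2) (h13 : s1 ≠ s3) (h23 : s2 ≠ s3)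
    (hcard : Fintype.card S = 4)
    (huniv : (Set.univ : Set S) = {s0, s1, s2, s3}) :
    (unionSub ⇑(permP s0 s1 s2 s3) ∧ interSub ⇑(permP s0 s1 s2 s3)) ∧
    (unionSub ⇑(permQ s0 s1 s2 s3) ∧ interSub ⇑(permQ s0 s1 s2 s3)) ∧
    ⇑(permP s0 s1 s2 s3) ∘ ⇑(permQ s0 s1 s2 s3) ∘
        ⇑(permP s0 s1 s2 s3) ∘ ⇑(permQ s0 s1 s2 s3) =
      fun X : Set S =>
        if X = {s1, s2} then Set.univ
        else if X = Set.univ then {s2, s3}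
        else if X = {s2, s3} then {s1, s2}
        else X := by
  have hsurj := encS_surj s0 s1 s2 s3 h01 h02 h03 h12 h13 h23 huniv
  have hinj := encS_inj s0 s1 s2 s3 h01 h02 h03 h12 h13 h23
  have hP := permP_encS s0 s1 s2 s3 h01 h02 h03 h12 h13 h23 huniv
  have hQ := permQ_encS s0 s1 s2 s3 h01 h02 h03 h12 h13 h23 huniv
  have hun := encS_union s0 s1 s2 s3
  have hin := encS_inter s0 s1 s2 s3 h01 h02 h03 h12 h13 h23
  have hsub := encS_subset s0 s1 s2 s3 h01 h02 h03 h12 h13 h23 huniv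
  refine ⟨⟨?_, ?_⟩, ⟨?_, ?_⟩, ?_⟩
  · intro X Y
    obtain ⟨v, rfl⟩ := hsurj X
    obtain ⟨w, rfl⟩ := hsurj Y
    rw [hun, hP, hP, hP, hun, hsub]
    exact (by decide : ∀ v w : BV4, subB (pF (orV v w)) (orV (pF v) (pF w)) = true) v w
  · intro X Y
    obtain ⟨v, rfl⟩ := hsurj X
    obtain ⟨w, rfl⟩ := hsurj Y
    rw [hin, hP, hP, hP, hun, hsub]
    exact (by decide : ∀ v w : BV4, subB (pF (andV v w)) (orV (pF v) (pF w)) = true) v w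
  · intro X Y
    obtain ⟨v, rfl⟩ := hsurj X
    obtain ⟨w, rfl⟩ := hsurj Y
    rw [hun, hQ, hQ, hQ, hun, hsub]
    exact (by decide : ∀ v w : BV4, subB (qF (orV v w)) (orV (qF v) (qF w)) = true) v w
  · intro X Y
    obtain ⟨v, rfl⟩ := hsurj X
    obtain ⟨w, rfl⟩ := hsurj Y
    rw [hin, hQ, hQ, hQ, hun, hsub]
    exact (by decide : ∀ v w : BV4, subB (qF (andV v w)) (orV (qF v) (qF w)) = true) v w
  · funext X
    obtain ⟨v, rfl⟩ := hsurj X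
    have hcomp : ∀ v : BV4, pF (qF (pF (qF v))) = tF v := by decide
    simp only [Function.comp_apply, hQ, hP, hcomp]
    simp only [setF s0 s1 s2 s3]
    simp only [setC s0 s1 s2 s3]
    simp only [setU s0 s1 s2 s3 huniv]
    simp only [hinj]
    split_ifs with hc1 hc2 hc3
    · subst hc1; simp [tF]
    · subst hc2; simp [tF]
    · subst hc3; simp [tF]
    · rw [show tF v = v by simp [tF, hc1, hc2, hc3]]
end

section
/- Let S be a set with |S| = 4. No bijection f : 2^S → 2^S that is a 3-cycle (i.e., f moves exactly three subsets of S, permuting them cyclically and fixing all others) is both union-subadditive and intersection-subadditive; i.e., no 3-cycle on 2^S belongs to M(S). -/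
open Classical

/-!
For `s ∈ S`, the two subadditivity conditions say exactly that the sets `X` with `s ∉ f X` are
closed under `∪` and `∩`. Let `f` be a 3-cycle and `s` a point on which some set of the cycle and
its image disagree. Going once around the cycle, membership of `s` switches from false to true
exactly once, so there is exactly one `Q ⊆ S \ {s}` with `s ∈ f Q`, and every other subset of
`S \ {s}` is mapped to a set avoiding `s`. As `S \ {s}` has at least three points, `Q` is the union
or the intersection of two other subsets of `S \ {s}`, which breaks the closure.
-/

theorem Equiv.Perm.IsThreeCycle.existsUnique_not_and_apply {α : Type*} [Fintype α]
    [DecidableEq α] {σ : Equiv.Perm α} (hσ : σ.IsThreeCycle) {p : α → Prop} {x : α}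
    (hx : ¬(p x ↔ p (σ x))) : ∃! y, ¬p y ∧ p (σ y) := by
  have hx_mem : x ∈ σ.support := Equiv.Perm.mem_support.2 fun h => hx (by rw [h])
  have hσ3 : σ (σ (σ x)) = x := by
    have h : σ ^ 3 = 1 := hσ.orderOf ▸ pow_orderOf_eq_one σ
    simpa [pow_succ] using Equiv.Perm.ext_iff.1 h x
  have hcycle : ∀ y, ¬p y ∧ p (σ y) → y = x ∨ y = σ x ∨ y = σ (σ x) := by
    intro y hy
    have hy_mem : y ∈ σ.support := Equiv.Perm.mem_support.2 fun h => hy.1 (h ▸ hy.2)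
    simpa [(hσ.support_eq_iff_mem_support).2 hx_mem] using hy_mem
  obtain ⟨y, hy⟩ : ∃ y, ¬p y ∧ p (σ y) := by
    by_cases hpx : p x
    · by_cases hpx2 : p (σ (σ x))
      · exact ⟨σ x, by tauto⟩
      · exact ⟨σ (σ x), hpx2, by rwa [hσ3]⟩
    · exact ⟨x, hpx, by tauto⟩
  refine ⟨y, hy, fun z hz => ?_⟩
  rcases hcycle y hy with rfl | rfl | rfl <;> rcases hcycle z hz with rfl | rfl | rfl <;> grind

theorem Set.exists_ne_union_or_inter_eq {α : Type*} {T Q : Set α} (hQ : Q ⊆ T)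
    (hT : 2 < T.ncard) :
    ∃ X ⊆ T, ∃ Y ⊆ T, X ≠ Q ∧ Y ≠ Q ∧ (X ∪ Y = Q ∨ X ∩ Y = Q) := by
  have hT_fin : T.Finite := Set.finite_of_ncard_pos (by omega)
  have hcard := Set.ncard_sdiff_add_ncard_of_subset hQ hT_fin
  rcases (by omega : 1 < Q.ncard ∨ 1 < (T \ Q).ncard) with hQ_two | hTQ_two
  · obtain ⟨u, hu, v, hv, huv⟩ := (Set.one_lt_ncard (hT_fin.subset hQ)).1 hQ_two
    refine ⟨Q \ {u}, Set.sdiff_subset.trans hQ, Q \ {v}, Set.sdiff_subset.trans hQ,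
      fun h => (h ▸ hu).2 rfl, fun h => (h ▸ hv).2 rfl, Or.inl ?_⟩
    ext; grind
  · obtain ⟨u, hu, v, hv, huv⟩ :=
      (Set.one_lt_ncard (hT_fin.subset Set.sdiff_subset)).1 hTQ_two
    refine ⟨insert u Q, Set.insert_subset hu.1 hQ, insert v Q, Set.insert_subset hv.1 hQ,
      fun h => hu.2 (h ▸ Set.mem_insert u Q), fun h => hv.2 (h ▸ Set.mem_insert v Q), Or.inr ?_⟩
    ext; grind

theorem not_unionSub_and_interSub_of_isThreeCycle {S : Type*} [Fintype S]
    (hS : 3 < Fintype.card S) (f : Equiv.Perm (Set S)) (h3 : Equiv.Perm.IsThreeCycle f) :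
    ¬ (unionSub ⇑f ∧ interSub ⇑f) := by
  rintro ⟨hu, hi⟩
  obtain ⟨A, hA, -⟩ := h3.isCycle
  obtain ⟨s, hs⟩ : ∃ s, ¬(s ∈ A ↔ s ∈ f A) := by
    by_contra! h
    exact hA (Set.ext h).symm
  obtain ⟨Q, ⟨hsQ, hsfQ⟩, hQ_unique⟩ := h3.existsUnique_not_and_apply (p := (s ∈ ·)) hs
  have hcompl : 2 < ({s}ᶜ : Set S).ncard := by
    rw [Set.ncard_compl, Set.ncard_singleton, Nat.card_eq_fintype_card]
    omega
  have hs_notMem : ∀ Z ⊆ ({s}ᶜ : Set S), Z ≠ Q → s ∉ f Z := fun Z hZ hZQ hsZ =>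
    hZQ (hQ_unique Z ⟨Set.subset_compl_singleton_iff.1 hZ, hsZ⟩)
  obtain ⟨X, hX, Y, hY, hXQ, hYQ, rfl | rfl⟩ :=
    Set.exists_ne_union_or_inter_eq (Set.subset_compl_singleton_iff.2 hsQ) hcompl
  · exact (hu X Y hsfQ).elim (hs_notMem X hX hXQ) (hs_notMem Y hY hYQ)
  · exact (hi X Y hsfQ).elim (hs_notMem X hX hXQ) (hs_notMem Y hY hYQ)

theorem stmt19 {S : Type*} [Fintype S] (hS : Fintype.card S = 4)
    (f : Equiv.Perm (Set S)) (h3 : Equiv.Perm.IsThreeCycle f) :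
    ¬ (unionSub ⇑f ∧ interSub ⇑f) :=
  not_unionSub_and_interSub_of_isThreeCycle (by omega) f h3
end
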